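/- arXiv:1904.08237 — 6 statements merged into one kernel-verified Lean document; each statement's English description precedes it below -/
import Mathlib

section
/- Let V be a real vector space, θ a derivation of the exterior algebra ΛV mapping V into V, ε ∈ V, and M a positive even integer. Then ε ∧ (θ^M ε) = θ( Σ_{i=0}^{M/2 − 1} (−1)^i (θ^i ε) ∧ (θ^{M−1−i} ε) ). Consequently, for any σ ∈ ΛV with θσ = 0, the element ε ∧ (θ^M ε) ∧ σ lies in the image of θ. -/
open ExteriorAlgebra

/-- Case 1 identity of the paper: if `θ` (denoted `D`) is a derivation of `ΛV` mapping `V`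
into `V`, `ε ∈ V`, and `M` is a positive even integer, then
`ε ∧ θᴹε = θ(∑_{i=0}^{M/2-1} (-1)ⁱ θⁱε ∧ θ^{M-1-i}ε)`; consequently for any `σ` with
`θσ = 0`, the element `ε ∧ θᴹε ∧ σ` lies in the image of `θ`. -/
theorem even_case_identity
    (V : Type*) [AddCommGroup V] [Module ℝ V]
    (D : Module.End ℝ (ExteriorAlgebra ℝ V))
    (hD : ∀ a b : ExteriorAlgebra ℝ V, D (a * b) = D a * b + a * D b)
    (hDV : ∀ x : V, ∃ y : V, D (ι ℝ x) = ι ℝ y)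
    (ε : V) (M : ℕ) (hM : 0 < M) (hMeven : Even M) :
    ι ℝ ε * (D ^ M) (ι ℝ ε) =
      D (∑ i ∈ Finset.range (M / 2),
          (-1 : ℝ) ^ i • ((D ^ i) (ι ℝ ε) * (D ^ (M - 1 - i)) (ι ℝ ε))) ∧
    ∀ σ : ExteriorAlgebra ℝ V, D σ = 0 →
      ∃ γ : ExteriorAlgebra ℝ V, ι ℝ ε * (D ^ M) (ι ℝ ε) * σ = D γ := by
  classical
  obtain ⟨n, hn⟩ := hMeven
  have hMn : M = 2 * n := by omega
  set y : ℕ → V := fun j => Nat.rec ε (fun _ v => Classical.choose (hDV v)) j with hy_def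
  have hy0 : y 0 = ε := rfl
  have hyD : ∀ j, D (ι ℝ (y j)) = ι ℝ (y (j + 1)) := fun j =>
    Classical.choose_spec (hDV (y j))
  have hy : ∀ j, (D ^ j) (ι ℝ ε) = ι ℝ (y j) := by
    intro j
    induction j with
    | zero => simp [hy0]
    | succ j ih => rw [pow_succ', Module.End.mul_apply, ih, hyD]
  have key : ι ℝ ε * (D ^ M) (ι ℝ ε) =
      D (∑ i ∈ Finset.range (M / 2),
        (-1 : ℝ) ^ i • ((D ^ i) (ι ℝ ε) * (D ^ (M - 1 - i)) (ι ℝ ε))) := by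
    have hn2 : M / 2 = n := by omega
    rw [hn2, map_sum]
    have hterm : ∀ i ∈ Finset.range n,
        D ((-1 : ℝ) ^ i • ((D ^ i) (ι ℝ ε) * (D ^ (M - 1 - i)) (ι ℝ ε))) =
        ((-1 : ℝ) ^ i • (ι ℝ (y i) * ι ℝ (y (M - i))) -
          (-1 : ℝ) ^ (i + 1) • (ι ℝ (y (i + 1)) * ι ℝ (y (M - (i + 1))))) := by
      intro i hi
      have hi' : i < n := Finset.mem_range.mp hi
      have h1 : M - 1 - i + 1 = M - i := by omega
      have h2 : M - (i + 1) = M - 1 - i := by omega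
      rw [map_smul, hy i, hy (M - 1 - i), hD, hyD i, hyD (M - 1 - i), h1, h2, pow_succ]
      module
    rw [Finset.sum_congr rfl hterm,
      Finset.sum_range_sub' (fun i => (-1 : ℝ) ^ i • (ι ℝ (y i) * ι ℝ (y (M - i))))]
    have hMn' : M - n = n := by omega
    rw [hMn']
    simp [hy0, hy M, ι_sq_zero]
  refine ⟨key, fun σ hσ => ⟨(∑ i ∈ Finset.range (M / 2),
    (-1 : ℝ) ^ i • ((D ^ i) (ι ℝ ε) * (D ^ (M - 1 - i)) (ι ℝ ε))) * σ, ?_⟩⟩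
  rw [hD, hσ, mul_zero, add_zero, key]
end

section
/- Let V be a real vector space, θ a derivation of the exterior algebra ΛV mapping V into V, ε ∈ V, and M ≥ 3 an odd integer. Suppose σ ∈ ΛV satisfies θσ = 0 and (θ^r ε) ∧ σ = 0 for all r ≥ M + 2. Then ε ∧ (θ^M ε) ∧ (θ^{M+1} ε) ∧ σ lies in the image of θ. -/
set_option maxHeartbeats 1000000


open ExteriorAlgebra

/-- Case 2.1 of the paper: if `θ` (denoted `D`) is a derivation of `ΛV` mapping `V` into `V`,
`ε ∈ V`, `M ≥ 3` is odd, and `σ` satisfies `θσ = 0` and `θʳε ∧ σ = 0` for all `r ≥ M + 2`,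
then `ε ∧ θᴹε ∧ θ^{M+1}ε ∧ σ` lies in the image of `θ`. -/
theorem case_2_1_in_image
    (V : Type*) [AddCommGroup V] [Module ℝ V]
    (D : Module.End ℝ (ExteriorAlgebra ℝ V))
    (hD : ∀ a b : ExteriorAlgebra ℝ V, D (a * b) = D a * b + a * D b)
    (hDV : ∀ x : V, ∃ y : V, D (ι ℝ x) = ι ℝ y)
    (ε : V) (M : ℕ) (hModd : Odd M) (hM3 : 3 ≤ M)
    (σ : ExteriorAlgebra ℝ V) (hσ : D σ = 0)
    (hhigh : ∀ r : ℕ, M + 2 ≤ r → (D ^ r) (ι ℝ ε) * σ = 0) :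
    ∃ γ : ExteriorAlgebra ℝ V,
      ι ℝ ε * (D ^ M) (ι ℝ ε) * (D ^ (M + 1)) (ι ℝ ε) * σ = D γ := by
  obtain ⟨k, hk⟩ := hModd
  have hk1 : 1 ≤ k := by omega
  set e : ℕ → ExteriorAlgebra ℝ V := fun j => (D ^ j) (ι ℝ ε) with he
  have hDe : ∀ j, D (e j) = e (j + 1) := by
    intro j
    simp only [he, pow_succ', Module.End.mul_apply]
  have heV : ∀ j, ∃ y : V, e j = ι ℝ y := by
    intro j
    induction j with
    | zero => exact ⟨ε, by simp [he]⟩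
    | succ j ih =>
      obtain ⟨y, hy⟩ := ih
      obtain ⟨z, hz⟩ := hDV y
      exact ⟨z, by rw [← hDe, hy, hz]⟩
  have hsq : ∀ j, e j * e j = 0 := by
    intro j; obtain ⟨y, hy⟩ := heV j; rw [hy]; exact ι_sq_zero y
  have hzero : ∀ r, M + 2 ≤ r → e r * σ = 0 := fun r hr => hhigh r hr
  set R : Submodule ℝ (ExteriorAlgebra ℝ V) := LinearMap.range D with hR
  have hmem : ∀ x, D x ∈ R := fun x => LinearMap.mem_range_self D x
  have hLeib : ∀ a b c : ℕ,
      e (a+1) * e b * e c * σ + e a * e (b+1) * e c * σ + e a * e b * e (c+1) * σ ∈ R := by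
    intro a b c
    have h : D (e a * e b * e c * σ)
        = e (a+1) * e b * e c * σ + e a * e (b+1) * e c * σ + e a * e b * e (c+1) * σ := by
      rw [hD (e a * e b * e c) σ, hσ, mul_zero, add_zero, hD (e a * e b) (e c),
        hD (e a) (e b), hDe, hDe, hDe]
      noncomm_ring
    exact h ▸ hmem _
  have hrelA : ∀ a b : ℕ,
      e (a+1) * e b * e (M+1) * σ + e a * e (b+1) * e (M+1) * σ ∈ R := by
    intro a b
    have h0 : e a * e b * e (M+2) * σ = 0 := by
      rw [mul_assoc, hzero (M+2) le_rfl, mul_zero]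
    have h := hLeib a b (M+1)
    rw [show M + 1 + 1 = M + 2 from rfl, h0, add_zero] at h
    exact h
  have hs2 : ∀ n : ℕ, ((-1 : ℝ) ^ n) * ((-1 : ℝ) ^ n) = 1 := by
    intro n; rw [← pow_add, ← two_mul, pow_mul]; norm_num
  -- chain 1 : u_j = e j * e (M - j) * e (M+1) * σ satisfies u_{j+1} ≡ -u_j
  have L1 : ∀ j, j ≤ k →
      e 0 * e M * e (M+1) * σ - ((-1 : ℝ) ^ j) • (e j * e (M - j) * e (M+1) * σ) ∈ R := by
    intro j
    induction j with
    | zero => intro _; simp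
    | succ j ih =>
      intro hj
      have hjk : j ≤ k := by omega
      have ihj := ih hjk
      have hb : M - j = (M - (j+1)) + 1 := by omega
      have hrel := hrelA j (M - (j+1))
      rw [← hb] at hrel
      have key : e 0 * e M * e (M+1) * σ
          - ((-1 : ℝ) ^ (j+1)) • (e (j+1) * e (M - (j+1)) * e (M+1) * σ)
          = (e 0 * e M * e (M+1) * σ - ((-1 : ℝ) ^ j) • (e j * e (M - j) * e (M+1) * σ))
            + ((-1 : ℝ) ^ j) • (e (j+1) * e (M - (j+1)) * e (M+1) * σ
                + e j * e (M - j) * e (M+1) * σ) := by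
        module
      rw [key]
      exact add_mem ihj (Submodule.smul_mem R _ hrel)
  -- reversed form of L1
  have L1' : ∀ j, j ≤ k →
      e j * e (M - j) * e (M+1) * σ - ((-1 : ℝ) ^ j) • (e 0 * e M * e (M+1) * σ) ∈ R := by
    intro j hj
    have h := Submodule.smul_mem R (-((-1 : ℝ) ^ j)) (L1 j hj)
    have key : (-((-1 : ℝ) ^ j)) • (e 0 * e M * e (M+1) * σ
          - ((-1 : ℝ) ^ j) • (e j * e (M - j) * e (M+1) * σ))
        = (((-1 : ℝ) ^ j) * ((-1 : ℝ) ^ j)) • (e j * e (M - j) * e (M+1) * σ)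
          - ((-1 : ℝ) ^ j) • (e 0 * e M * e (M+1) * σ) := by
      module
    rw [key, hs2 j, one_smul] at h
    exact h
  -- chain 2 : w_j = e j * e (M + 1 - j) * e M * σ
  have L2 : ∀ j, 1 ≤ j → j ≤ k →
      e j * e (M + 1 - j) * e M * σ
        - ((-1 : ℝ) ^ j * ((j : ℝ) - 1)) • (e 0 * e M * e (M+1) * σ) ∈ R := by
    intro j hj1
    induction j, hj1 using Nat.le_induction with
    | base =>
      intro _
      have h0 : e 1 * e (M + 1 - 1) * e M * σ = 0 := by
        rw [Nat.add_sub_cancel, mul_assoc (e 1), hsq, mul_zero, zero_mul]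
      rw [h0]
      norm_num
    | succ j hj1 ih =>
      intro hjk
      have hj : j ≤ k := by omega
      have ihj := ih hj
      have huj := L1' j hj
      have hb : M + 1 - j = (M - j) + 1 := by omega
      have hb2 : M + 1 - (j+1) = M - j := by omega
      rw [hb] at ihj
      rw [hb2]
      have hrel := hLeib j (M - j) M
      have key : e (j+1) * e (M - j) * e M * σ
          - ((-1 : ℝ) ^ (j+1) * (((j+1 : ℕ) : ℝ) - 1)) • (e 0 * e M * e (M+1) * σ)
          = (e (j+1) * e (M - j) * e M * σ + e j * e ((M - j) + 1) * e M * σ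
              + e j * e (M - j) * e (M+1) * σ)
            - (e j * e ((M - j) + 1) * e M * σ
              - ((-1 : ℝ) ^ j * ((j : ℝ) - 1)) • (e 0 * e M * e (M+1) * σ))
            - (e j * e (M - j) * e (M+1) * σ
              - ((-1 : ℝ) ^ j) • (e 0 * e M * e (M+1) * σ)) := by
        push_cast
        module
      rw [key]
      exact sub_mem (sub_mem hrel ihj) huj
  -- assemble
  have hMk : M - k = k + 1 := by omega
  have h1 := L1' k le_rfl
  rw [hMk] at h1
  have h2 := L2 k hk1 le_rfl
  have hwk : M + 1 - k = k + 2 := by omega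
  rw [hwk] at h2
  have hB : e k * e (k+2) * e M * σ + e k * e (k+1) * e (M+1) * σ ∈ R := by
    have h := hLeib k (k+1) M
    rw [show e (k+1) * e (k+1) * e M * σ = 0 by rw [hsq, zero_mul, zero_mul], zero_add] at h
    exact h
  have key : ((-1 : ℝ) ^ k * (k : ℝ)) • (e 0 * e M * e (M+1) * σ)
      = ((e k * e (k+2) * e M * σ + e k * e (k+1) * e (M+1) * σ)
          - (e k * e (k+1) * e (M+1) * σ - ((-1 : ℝ) ^ k) • (e 0 * e M * e (M+1) * σ)))
        - (e k * e (k+2) * e M * σ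
          - ((-1 : ℝ) ^ k * ((k : ℝ) - 1)) • (e 0 * e M * e (M+1) * σ)) := by
    module
  have hst : ((-1 : ℝ) ^ k * (k : ℝ)) • (e 0 * e M * e (M+1) * σ) ∈ R :=
    key ▸ sub_mem (sub_mem hB h1) h2
  have hne : ((-1 : ℝ) ^ k * (k : ℝ)) ≠ 0 :=
    mul_ne_zero (pow_ne_zero _ (by norm_num)) (Nat.cast_ne_zero.mpr (by omega))
  have hTmem : e 0 * e M * e (M+1) * σ ∈ R := by
    have h := Submodule.smul_mem R ((-1 : ℝ) ^ k * (k : ℝ))⁻¹ hst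
    rwa [smul_smul, inv_mul_cancel₀ hne, one_smul] at h
  obtain ⟨γ, hγ⟩ := hTmem
  refine ⟨γ, ?_⟩
  rw [hγ]
  simp only [he, pow_zero, Module.End.one_apply]
end

section
/- Let V be a real vector space, θ a derivation of the exterior algebra ΛV mapping V into V, ε ∈ V, and M ≥ 3 an odd integer. Suppose σ, τ ∈ ΛV satisfy θσ = 0, θτ = σ, and (θ^{M+1} ε) ∧ τ = 0. Then ε ∧ (θ^M ε) ∧ σ lies in the image of θ. -/
open ExteriorAlgebra

/-- Case 2.2 of the paper: if `θ` (denoted `D`) is a derivation of `ΛV` mapping `V` into `V`,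
`ε ∈ V`, `M ≥ 3` is odd, and `σ, τ` satisfy `θσ = 0`, `θτ = σ` and `θ^{M+1}ε ∧ τ = 0`,
then `ε ∧ θᴹε ∧ σ` lies in the image of `θ`. -/
theorem case_2_2_in_image
    (V : Type*) [AddCommGroup V] [Module ℝ V]
    (D : Module.End ℝ (ExteriorAlgebra ℝ V))
    (hD : ∀ a b : ExteriorAlgebra ℝ V, D (a * b) = D a * b + a * D b)
    (hDV : ∀ x : V, ∃ y : V, D (ι ℝ x) = ι ℝ y)
    (ε : V) (M : ℕ) (hModd : Odd M) (hM3 : 3 ≤ M)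
    (σ τ : ExteriorAlgebra ℝ V) (hσ : D σ = 0) (hτ : D τ = σ)
    (hτε : (D ^ (M + 1)) (ι ℝ ε) * τ = 0) :
    ∃ γ : ExteriorAlgebra ℝ V, ι ℝ ε * (D ^ M) (ι ℝ ε) * σ = D γ := by
  obtain ⟨k, hk⟩ := hModd
  set a : ℕ → ExteriorAlgebra ℝ V := fun i => (D ^ i) (ι ℝ ε) with ha_def
  have Da : ∀ i, D (a i) = a (i + 1) := by
    intro i
    simp only [ha_def]
    rw [pow_succ']
    rfl
  have haV : ∀ i, ∃ y : V, a i = ι ℝ y := by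
    intro i
    induction i with
    | zero => exact ⟨ε, by simp [ha_def]⟩
    | succ n ih =>
      obtain ⟨y, hy⟩ := ih
      obtain ⟨z, hz⟩ := hDV y
      exact ⟨z, by rw [← Da, hy, hz]⟩
  set R := LinearMap.range D with hR
  have hmem : ∀ x : ExteriorAlgebra ℝ V, D x ∈ R := fun x => ⟨x, rfl⟩
  have hA : ∀ p q, D (a p * a q * τ)
      = a (p+1) * a q * τ + a p * a (q+1) * τ + a p * a q * σ := by
    intro p q
    rw [hD, hD, hτ, Da, Da, add_mul]
  have hB : ∀ p q, D (a p * a q * σ)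
      = a (p+1) * a q * σ + a p * a (q+1) * σ := by
    intro p q
    rw [hD, hD, hσ, Da, Da, add_mul, mul_zero, add_zero]
  set Q : ℕ → ExteriorAlgebra ℝ V := fun j => a (k - j) * a (k + 1 + j) * σ with hQ_def
  set U : ℕ → ExteriorAlgebra ℝ V := fun j => a (k + 1 - j) * a (k + 1 + j) * τ with hU_def
  have hU0 : U 0 = 0 := by
    obtain ⟨y, hy⟩ := haV (k + 1)
    simp only [hU_def, Nat.sub_zero, Nat.add_zero, hy]
    rw [ι_sq_zero, zero_mul]
  have hUtop : U (k + 1) = 0 := by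
    have e1 : k + 1 - (k + 1) = 0 := by omega
    have e2 : k + 1 + (k + 1) = 2 * k + 2 := by omega
    have h2 : a (2 * k + 2) * τ = 0 := by
      have hM1 : M + 1 = 2 * k + 2 := by omega
      simpa only [ha_def, hM1] using hτε
    simp only [hU_def, e1, e2]
    rw [mul_assoc, h2, mul_zero]
  have hAR : ∀ j, j ≤ k → Q j + U j + U (j + 1) ∈ R := by
    intro j hj
    have key : Q j + U j + U (j + 1) = D (a (k - j) * a (k + 1 + j) * τ) := by
      rw [hA]
      have e1 : k - j + 1 = k + 1 - j := by omega
      have e2 : k + 1 + j + 1 = k + 1 + (j + 1) := by omega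
      have e3 : k + 1 - (j + 1) = k - j := by omega
      simp only [hQ_def, hU_def, e1, e2, e3]
      abel
    rw [key]; exact hmem _
  have hBR : ∀ j, j + 1 ≤ k → Q (j + 1) + Q j ∈ R := by
    intro j hj
    have key : Q (j + 1) + Q j = D (a (k - (j + 1)) * a (k + 1 + j) * σ) := by
      rw [hB]
      have e1 : k - (j + 1) + 1 = k - j := by omega
      have e2 : k + 1 + j + 1 = k + 1 + (j + 1) := by omega
      simp only [hQ_def, e1, e2]
      abel
    rw [key]; exact hmem _
  have hQind : ∀ j, j ≤ k → Q j - ((-1 : ℝ) ^ j) • Q 0 ∈ R := by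
    intro j
    induction j with
    | zero => intro _; simp
    | succ n ih =>
      intro hj
      have hn : n ≤ k := by omega
      have h1 := hBR n hj
      have h2 := ih hn
      have key : Q (n + 1) - ((-1 : ℝ) ^ (n + 1)) • Q 0
          = (Q (n + 1) + Q n) - (Q n - ((-1 : ℝ) ^ n) • Q 0) := by
        have : ((-1 : ℝ) ^ (n + 1)) = -((-1 : ℝ) ^ n) := by ring
        rw [this]
        module
      rw [key]
      exact Submodule.sub_mem R h1 h2
  have hUind : ∀ j, j ≤ k + 1 → U j - (((-1 : ℝ) ^ j) * j) • Q 0 ∈ R := by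
    intro j
    induction j with
    | zero => intro _; simp [hU0]
    | succ n ih =>
      intro hj
      have hn : n ≤ k := by omega
      have h1 := hAR n hn
      have h2 := ih (by omega)
      have h3 := hQind n hn
      have key : U (n + 1) - (((-1 : ℝ) ^ (n + 1)) * (n + 1 : ℕ)) • Q 0
          = (Q n + U n + U (n + 1)) - (U n - (((-1 : ℝ) ^ n) * n) • Q 0)
            - (Q n - ((-1 : ℝ) ^ n) • Q 0) := by
        have e : (((-1 : ℝ) ^ (n + 1)) * ((n : ℕ) + 1 : ℕ))
            = -(((-1 : ℝ) ^ n) * n) - ((-1 : ℝ) ^ n) := by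
          push_cast; ring
        rw [e]
        module
      rw [key]
      exact Submodule.sub_mem R (Submodule.sub_mem R h1 h2) h3
  have hQ0 : Q 0 ∈ R := by
    have h := hUind (k + 1) le_rfl
    rw [hUtop] at h
    have hc : (((-1 : ℝ) ^ (k + 1)) * ((k : ℕ) + 1 : ℕ)) ≠ 0 := by
      apply mul_ne_zero
      · exact pow_ne_zero _ (by norm_num)
      · exact Nat.cast_ne_zero.mpr (Nat.succ_ne_zero k)
    set c : ℝ := ((-1 : ℝ) ^ (k + 1)) * ((k : ℕ) + 1 : ℕ) with hc_def
    have e : (0 : ExteriorAlgebra ℝ V) - c • Q 0 = (-c) • Q 0 := by module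
    rw [e] at h
    have h2 := Submodule.smul_mem R (-c)⁻¹ h
    rwa [smul_smul, inv_mul_cancel₀ (neg_ne_zero.mpr hc), one_smul] at h2
  have hQk : Q k ∈ R := by
    have h1 := hQind k le_rfl
    have h2 := Submodule.smul_mem R ((-1 : ℝ) ^ k) hQ0
    have : Q k = (Q k - ((-1 : ℝ) ^ k) • Q 0) + ((-1 : ℝ) ^ k) • Q 0 := by module
    rw [this]
    exact Submodule.add_mem R h1 h2
  have hgoal : ι ℝ ε * (D ^ M) (ι ℝ ε) * σ = Q k := by
    have e1 : k - k = 0 := by omega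
    have e2 : k + 1 + k = M := by omega
    simp only [hQ_def, e1, e2, ha_def]
    simp
  obtain ⟨γ, hγ⟩ := hQk
  exact ⟨γ, by rw [hgoal, ← hγ]⟩
end

section
/- Let V be a real vector space, θ a derivation of the exterior algebra ΛV mapping V into V, ε ∈ V, and M ≥ 3 an odd integer. Suppose θ^{M+1} ε = 0 and λ ∈ ΛV satisfies θλ = 0. Then ε ∧ (θ^{M−1} ε) ∧ (θ^M ε) ∧ λ lies in the image of θ. -/
open ExteriorAlgebra

/-- Case 2.3 of the paper: if `θ` (denoted `D`) is a derivation of `ΛV` mapping `V` into `V`,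
`ε ∈ V`, `M ≥ 3` is odd, `θ^{M+1}ε = 0`, and `λ` satisfies `θλ = 0`, then
`ε ∧ θ^{M-1}ε ∧ θᴹε ∧ λ` lies in the image of `θ`. -/
theorem case_2_3_in_image
    (V : Type*) [AddCommGroup V] [Module ℝ V]
    (D : Module.End ℝ (ExteriorAlgebra ℝ V))
    (hD : ∀ a b : ExteriorAlgebra ℝ V, D (a * b) = D a * b + a * D b)
    (hDV : ∀ x : V, ∃ y : V, D (ι ℝ x) = ι ℝ y)
    (ε : V) (M : ℕ) (hModd : Odd M) (hM3 : 3 ≤ M)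
    (hεM : (D ^ (M + 1)) (ι ℝ ε) = 0)
    (lam : ExteriorAlgebra ℝ V) (hlam : D lam = 0) :
    ∃ γ : ExteriorAlgebra ℝ V,
      ι ℝ ε * (D ^ (M - 1)) (ι ℝ ε) * (D ^ M) (ι ℝ ε) * lam = D γ := by
  obtain ⟨m, hm⟩ := hModd
  subst hm
  have hm1 : 1 ≤ m := by omega
  set e : ℕ → ExteriorAlgebra ℝ V := fun i => (D ^ i) (ι ℝ ε) with he_def
  have hDe : ∀ i, D (e i) = e (i + 1) := by
    intro i
    simp [he_def, pow_succ', Module.End.mul_apply]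
  have hvec : ∀ i, ∃ x : V, e i = ι ℝ x := by
    intro i
    induction i with
    | zero => exact ⟨ε, by simp [he_def]⟩
    | succ n ih =>
      obtain ⟨x, hx⟩ := ih
      obtain ⟨y, hy⟩ := hDV x
      exact ⟨y, by rw [← hDe, hx, hy]⟩
  have hzero : e (2 * m + 1 + 1) = 0 := hεM
  have hD3 : ∀ a b c : ExteriorAlgebra ℝ V,
      D (a * b * c) = D a * b * c + a * D b * c + a * b * D c := by
    intro a b c
    rw [hD, hD, add_mul]
  set S : ℕ → ExteriorAlgebra ℝ V :=
    fun k => ∑ i ∈ Finset.range (k + 1),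
      ((-1 : ℝ) ^ i) • (e i * e (2 * m - 1 - i) * e (2 * m + 1)) with hS_def
  have key : ∀ k, k ≤ m - 1 →
      D (S k) = e 0 * e (2 * m) * e (2 * m + 1)
        + ((-1 : ℝ) ^ k) • (e (k + 1) * e (2 * m - 1 - k) * e (2 * m + 1)) := by
    intro k
    induction k with
    | zero =>
      intro _
      have h1 : 2 * m - 1 - 0 + 1 = 2 * m := by omega
      simp only [hS_def, zero_add, Finset.sum_range_one, pow_zero, one_smul]
      rw [hD3]
      rw [hDe, hDe, hDe, h1, hzero]
      rw [mul_zero, add_zero, add_comm]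
    | succ k ih =>
      intro hk
      have hk' : k ≤ m - 1 := by omega
      have h1 : 2 * m - 1 - (k + 1) = 2 * m - 2 - k := by omega
      have h2 : 2 * m - 2 - k + 1 = 2 * m - 1 - k := by omega
      have hsum : S (k + 1) = S k + ((-1 : ℝ) ^ (k + 1)) •
          (e (k + 1) * e (2 * m - 1 - (k + 1)) * e (2 * m + 1)) := by
        simp [hS_def, Finset.sum_range_succ]
      rw [hsum, map_add, map_smul, ih hk', hD3, hDe, hDe, hDe, hzero, h1, h2]
      rw [mul_zero, add_zero, smul_add]
      rw [pow_succ]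
      have : ((-1 : ℝ) ^ k * -1) • (e (k + 1) * e (2 * m - 1 - k) * e (2 * m + 1))
          = -(((-1 : ℝ) ^ k) • (e (k + 1) * e (2 * m - 1 - k) * e (2 * m + 1))) := by
        rw [mul_neg_one, neg_smul]
      rw [this]
      abel
  have hfin := key (m - 1) le_rfl
  have hmm : 2 * m - 1 - (m - 1) = m := by omega
  have hmm2 : m - 1 + 1 = m := by omega
  rw [hmm, hmm2] at hfin
  obtain ⟨x, hx⟩ := hvec m
  rw [hx, ι_sq_zero, zero_mul, smul_zero, add_zero] at hfin
  refine ⟨S (m - 1) * lam, ?_⟩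
  rw [hD, hlam, mul_zero, add_zero, hfin]
  have hM1 : 2 * m + 1 - 1 = 2 * m := by omega
  rw [hM1]
  have h0 : e 0 = ι ℝ ε := by simp [he_def]
  rw [← h0]
  rfl
end

section
/- Let S' be a real vector space of dimension 2p with p ≥ 1, let Σ ∈ Λ²S' satisfy Σ^p ≠ 0, and let φ ∈ S' be any vector. Then there exists a nonzero η ∈ Λ^{p+1}S' such that η ∧ Σ = 0 and η ∧ φ = 0. -/
set_option maxHeartbeats 1000000

open ExteriorAlgebra

section Helpers

variable {V : Type*} [AddCommGroup V] [Module ℝ V]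

/-- Interior product (contraction) on the exterior algebra. -/
noncomputable def ctr (α : Module.Dual ℝ V) : ExteriorAlgebra ℝ V →ₗ[ℝ] ExteriorAlgebra ℝ V :=
  CliffordAlgebra.contractLeft (Q := (0 : QuadraticForm ℝ V)) α

theorem ctr_ι (α : Module.Dual ℝ V) (x : V) : ctr α (ι ℝ x) = algebraMap ℝ _ (α x) :=
  CliffordAlgebra.contractLeft_ι _ _ _

theorem ctr_ι_mul (α : Module.Dual ℝ V) (x : V) (b : ExteriorAlgebra ℝ V) :
    ctr α (ι ℝ x * b) = α x • b - ι ℝ x * ctr α b :=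
  CliffordAlgebra.contractLeft_ι_mul _ _ _

theorem ctr_ctr (α : Module.Dual ℝ V) (x : ExteriorAlgebra ℝ V) : ctr α (ctr α x) = 0 :=
  CliffordAlgebra.contractLeft_contractLeft _ _

theorem ctr_comm (α β : Module.Dual ℝ V) (x : ExteriorAlgebra ℝ V) :
    ctr α (ctr β x) = - ctr β (ctr α x) :=
  CliffordAlgebra.contractLeft_comm _ _ _

theorem ctr_algebraMap (α : Module.Dual ℝ V) (r : ℝ) :
    ctr α (algebraMap ℝ _ r) = 0 :=
  CliffordAlgebra.contractLeft_algebraMap _ _ _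

theorem ctr_one (α : Module.Dual ℝ V) : ctr α (1 : ExteriorAlgebra ℝ V) = 0 := by
  simpa using ctr_algebraMap α 1

theorem ctr_ι_mul_ι (α : Module.Dual ℝ V) (x y : V) :
    ctr α (ι ℝ x * ι ℝ y) = α x • ι ℝ y - α y • ι ℝ x := by
  rw [ctr_ι_mul, ctr_ι, ← Algebra.commutes, ← Algebra.smul_def]

theorem ι_mul_comm (x y : V) : ι ℝ x * ι ℝ y = -(ι ℝ y * ι ℝ x) :=
  eq_neg_of_add_eq_zero_left (ι_add_mul_swap x y)

theorem ι_mem_one (v : V) : ι ℝ v ∈ ⋀[ℝ]^1 V := by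
  show _ ∈ LinearMap.range (ι ℝ : V →ₗ[ℝ] ExteriorAlgebra ℝ V) ^ 1
  rw [pow_one]; exact ⟨v, rfl⟩

theorem mul_mem_pow_add {a b : ExteriorAlgebra ℝ V} {k l : ℕ}
    (ha : a ∈ ⋀[ℝ]^k V) (hb : b ∈ ⋀[ℝ]^l V) : a * b ∈ ⋀[ℝ]^(k+l) V := by
  show a * b ∈ LinearMap.range (ι ℝ : V →ₗ[ℝ] ExteriorAlgebra ℝ V) ^ (k + l)
  rw [pow_add]
  exact Submodule.mul_mem_mul ha hb

theorem pow_mem_pow_two_mul {a : ExteriorAlgebra ℝ V} (ha : a ∈ ⋀[ℝ]^2 V) (k : ℕ) :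
    a ^ k ∈ ⋀[ℝ]^(2*k) V := by
  show a ^ k ∈ LinearMap.range (ι ℝ : V →ₗ[ℝ] ExteriorAlgebra ℝ V) ^ (2 * k)
  rw [pow_mul]
  exact Submodule.pow_mem_pow _ ha k

/-- contraction of a 2-vector is a 1-vector -/
theorem ctr_mem_one (α : Module.Dual ℝ V) {S : ExteriorAlgebra ℝ V} (hS : S ∈ ⋀[ℝ]^2 V) :
    ctr α S ∈ LinearMap.range (ι ℝ : V →ₗ[ℝ] ExteriorAlgebra ℝ V) := by
  replace hS : S ∈ LinearMap.range (ι ℝ : V →ₗ[ℝ] ExteriorAlgebra ℝ V) *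
      LinearMap.range (ι ℝ : V →ₗ[ℝ] ExteriorAlgebra ℝ V) := by
    rw [← pow_two]; exact hS
  refine Submodule.mul_induction_on hS ?_ ?_
  · rintro x ⟨x, rfl⟩ y ⟨y, rfl⟩
    rw [ctr_ι_mul_ι]
    exact Submodule.sub_mem _ (Submodule.smul_mem _ _ ⟨y, rfl⟩) (Submodule.smul_mem _ _ ⟨x, rfl⟩)
  · intro a b ha hb
    rw [map_add]; exact Submodule.add_mem _ ha hb

/-- Leibniz rule for contraction against left multiplication by a 2-vector. -/
theorem ctr_two_mul (α : Module.Dual ℝ V) {S : ExteriorAlgebra ℝ V} (hS : S ∈ ⋀[ℝ]^2 V)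
    (x : ExteriorAlgebra ℝ V) : ctr α (S * x) = ctr α S * x + S * ctr α x := by
  replace hS : S ∈ LinearMap.range (ι ℝ : V →ₗ[ℝ] ExteriorAlgebra ℝ V) *
      LinearMap.range (ι ℝ : V →ₗ[ℝ] ExteriorAlgebra ℝ V) := by
    rw [← pow_two]; exact hS
  refine Submodule.mul_induction_on
    (C := fun S => ctr α (S * x) = ctr α S * x + S * ctr α x) hS ?_ ?_
  · rintro a ⟨a, rfl⟩ b ⟨b, rfl⟩
    rw [mul_assoc, ctr_ι_mul, ctr_ι_mul, ctr_ι_mul_ι]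
    simp only [mul_sub, sub_mul, smul_mul_assoc, mul_smul_comm, mul_assoc]
    abel
  · intro a b ha hb
    rw [add_mul, map_add, map_add, add_mul, add_mul]
    rw [ha, hb]; abel

/-- sign rule: for `x ∈ ⋀^k`, `x * ι v = (-1)^k • (ι v * x)` -/
theorem mul_ι_of_mem_pow {k : ℕ} {x : ExteriorAlgebra ℝ V} (hx : x ∈ ⋀[ℝ]^k V) (v : V) :
    x * ι ℝ v = ((-1:ℝ))^k • (ι ℝ v * x) := by
  induction hx using Submodule.pow_induction_on_left' with
  | algebraMap r => simp [← Algebra.commutes, ← Algebra.smul_def]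
  | add x y i hx hy ihx ihy => rw [add_mul, mul_add, smul_add, ihx, ihy]
  | mem_mul m hm i x hx ih =>
    obtain ⟨m, rfl⟩ := hm
    rw [mul_assoc, ih, mul_smul_comm, ← mul_assoc, ι_mul_comm m v, neg_mul, ← mul_assoc,
      pow_succ, mul_smul]
    simp

theorem eq_zero_of_mem_pow_gt [FiniteDimensional ℝ V] {k : ℕ} (h : Module.finrank ℝ V < k)
    {x : ExteriorAlgebra ℝ V} (hx : x ∈ ⋀[ℝ]^k V) : x = 0 := by
  rw [← ιMulti_span_fixedDegree] at hx
  have hz : ∀ v : Fin k → V, ιMulti ℝ k v = 0 := by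
    intro v
    refine AlternatingMap.map_linearDependent _ v (fun hli => absurd hli.fintype_card_le_finrank ?_)
    simpa using h.not_ge
  rw [Submodule.span_eq_bot.mpr] at hx
  · simpa using hx
  · rintro _ ⟨v, rfl⟩; exact hz v

theorem map_mem_pow {W' : Type*} [AddCommGroup W'] [Module ℝ W'] (f : V →ₗ[ℝ] W') {k : ℕ}
    {x : ExteriorAlgebra ℝ V} (hx : x ∈ ⋀[ℝ]^k V) : map f x ∈ ⋀[ℝ]^k W' := by
  induction hx using Submodule.pow_induction_on_left' with
  | algebraMap r => rw [AlgHom.commutes]; exact Submodule.algebraMap_mem r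
  | add x y i hx hy ihx ihy => rw [map_add]; exact add_mem ihx ihy
  | mem_mul m hm i x hx ih =>
    obtain ⟨m, rfl⟩ := hm
    rw [map_mul, map_apply_ι]
    show _ ∈ LinearMap.range (ι ℝ : W' →ₗ[ℝ] ExteriorAlgebra ℝ W') ^ (i+1)
    rw [pow_succ']
    exact Submodule.mul_mem_mul ⟨f m, rfl⟩ ih

theorem map_rho_eq (α β : Module.Dual ℝ V) (φ w : V) (ρ : V →ₗ[ℝ] V)
    (hρ : ∀ v, ρ v = v - β v • φ - α v • w)
    {S : ExteriorAlgebra ℝ V} (hS : S ∈ ⋀[ℝ]^2 V) :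
    map ρ S = S - ι ℝ φ * ctr β S - ι ℝ w * ctr α S
      + ι ℝ φ * ι ℝ w * ctr α (ctr β S) := by
  replace hS : S ∈ LinearMap.range (ι ℝ : V →ₗ[ℝ] ExteriorAlgebra ℝ V) *
      LinearMap.range (ι ℝ : V →ₗ[ℝ] ExteriorAlgebra ℝ V) := by
    rw [← pow_two]; exact hS
  refine Submodule.mul_induction_on
    (C := fun S => map ρ S = S - ι ℝ φ * ctr β S - ι ℝ w * ctr α S
      + ι ℝ φ * ι ℝ w * ctr α (ctr β S)) hS ?_ ?_
  · rintro _ ⟨a, rfl⟩ _ ⟨b, rfl⟩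
    rw [map_mul, map_apply_ι, map_apply_ι, hρ a, hρ b]
    simp only [ctr_ι_mul_ι, ctr_ι, map_sub, map_smul, sub_mul, mul_sub, smul_mul_assoc,
      mul_smul_comm, smul_smul, smul_sub, ι_sq_zero, Algebra.algebraMap_eq_smul_one, mul_one,
      smul_zero, mul_zero, zero_mul, sub_zero, ι_mul_comm w φ, ι_mul_comm a φ, ι_mul_comm a w,
      mul_neg, smul_neg]
    module
  · intro a b ha hb
    simp only [map_add, mul_add, add_mul]
    rw [ha, hb]; abel

/-- contraction by a functional vanishing on `W` kills the image of `Λ W`. -/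
theorem ctr_map_subtype (W : Submodule ℝ V) (β : Module.Dual ℝ V) (hβ : W ≤ LinearMap.ker β)
    (y : ExteriorAlgebra ℝ ↥W) : ctr β (map W.subtype y) = 0 := by
  induction y using CliffordAlgebra.left_induction with
  | algebraMap r => rw [AlgHom.commutes]; exact ctr_algebraMap β r
  | add x y hx hy => rw [map_add, map_add, hx, hy, add_zero]
  | ι_mul x m hx =>
    rw [map_mul, map_apply_ι, ctr_ι_mul, hx, mul_zero, sub_zero]
    have : β (W.subtype m) = 0 := hβ m.2
    rw [this, zero_smul]

theorem binom_sq_zero {A : Type*} [Ring A] {a b : A} (h : Commute a b) (hb : b * b = 0) :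
    ∀ n : ℕ, (a + b) ^ (n+1) = a ^ (n+1) + (n+1) • (a ^ n * b) := by
  intro n
  induction n with
  | zero => simp
  | succ n ih =>
    have hba : a ^ n * b * a = a ^ (n+1) * b := by
      rw [mul_assoc, ← h.eq, ← mul_assoc, ← pow_succ]
    have hbb : a ^ n * b * b = 0 := by rw [mul_assoc, hb, mul_zero]
    calc (a + b) ^ (n+1+1) = (a ^ (n+1) + (n+1) • (a ^ n * b)) * (a + b) := by
          rw [pow_succ, ih]
      _ = a ^ (n+1) * a + a ^ (n+1) * b + ((n+1) • (a ^ n * b * a) + (n+1) • (a ^ n * b * b)) := by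
          simp only [add_mul, mul_add, smul_mul_assoc, smul_add]
          abel
      _ = a ^ (n+1+1) + (n+1+1) • (a ^ (n+1) * b) := by
          rw [hba, hbb, smul_zero, add_zero, ← pow_succ,
            succ_nsmul (a ^ (n+1) * b) (n+1), add_right_comm, add_assoc]

end Helpers

section Main

universe u

theorem exists_eta_aux :
    ∀ (p : ℕ) (S' : Type u) [AddCommGroup S'] [Module ℝ S'] [FiniteDimensional ℝ S'],
      Module.finrank ℝ S' = 2 * (p + 1) → ∀ (Sig : ExteriorAlgebra ℝ S'),
      Sig ∈ ⋀[ℝ]^2 S' → Sig ^ (p+1) ≠ 0 → ∀ φ : S',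
      ∃ η ∈ ⋀[ℝ]^(p + 2) S', η ≠ 0 ∧ η * Sig = 0 ∧ η * ι ℝ φ = 0 := by
  intro p
  induction p with
  | zero =>
    intro S' _ _ _ hdim Sig hSig2 hSigp φ
    rw [pow_one] at hSigp
    refine ⟨Sig, hSig2, hSigp, ?_, ?_⟩
    · exact eq_zero_of_mem_pow_gt (by rw [hdim]; norm_num) (mul_mem_pow_add hSig2 hSig2)
    · refine eq_zero_of_mem_pow_gt (k := 3) (by rw [hdim]; norm_num) ?_
      exact mul_mem_pow_add hSig2 (ι_mem_one φ)
  | succ p IH =>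
    intro S' _ _ _ hdim Sig hSig2 hSigp φ0
    -- get a nonzero vector φ, equal to φ0 when possible
    have hnt : Nontrivial S' := by
      refine Module.nontrivial_of_finrank_pos (R := ℝ) ?_
      rw [hdim]; omega
    obtain ⟨φ, hφne, hφcase⟩ : ∃ φ : S', φ ≠ 0 ∧ (ι ℝ φ0 = 0 ∨ φ = φ0) := by
      by_cases h0 : φ0 = 0
      · obtain ⟨v, hv⟩ := exists_ne (0 : S')
        exact ⟨v, hv, Or.inl (by rw [h0, map_zero])⟩
      · exact ⟨φ0, h0, Or.inr rfl⟩
    -- the linear map L : α ↦ (vector corresponding to ctr α Sig)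
    set L : Module.Dual ℝ S' →ₗ[ℝ] S' :=
      ιInv ∘ₗ (LinearMap.flip (CliffordAlgebra.contractLeft
        (Q := (0 : QuadraticForm ℝ S'))) Sig) with hLdef
    have hL : ∀ α : Module.Dual ℝ S', ι ℝ (L α) = ctr α Sig := by
      intro α
      obtain ⟨v, hv⟩ := ctr_mem_one α hSig2
      have : L α = ιInv (ctr α Sig) := rfl
      rw [this, ← hv, ι_leftInverse v]
    -- L is injective
    have hLinj : Function.Injective L := by
      rw [← LinearMap.ker_eq_bot, LinearMap.ker_eq_bot']
      intro α hα
      by_contra hα0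
      have hctr0 : ctr α Sig = 0 := by rw [← hL α, hα, map_zero]
      have hpow : ∀ k : ℕ, ctr α (Sig ^ k) = 0 := by
        intro k
        induction k with
        | zero => simpa using ctr_one α
        | succ k ih => rw [pow_succ', ctr_two_mul α hSig2, hctr0, zero_mul, ih, mul_zero, add_zero]
      obtain ⟨v, hv⟩ : ∃ v, α v ≠ 0 := by
        by_contra h
        push_neg at h
        exact hα0 (LinearMap.ext fun v => h v)
      have htop : ι ℝ v * Sig ^ (p+2) = 0 := by
        refine eq_zero_of_mem_pow_gt (k := 1 + 2*(p+2)) (by rw [hdim]; omega) ?_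
        exact mul_mem_pow_add (ι_mem_one v) (pow_mem_pow_two_mul hSig2 _)
      have := ctr_ι_mul α v (Sig ^ (p+2))
      rw [htop, map_zero, hpow, mul_zero, sub_zero] at this
      exact hSigp (by simpa [hv] using this.symm)
    -- L is surjective
    have hLsurj : Function.Surjective L := by
      have := Subspace.dual_finrank_eq (K := ℝ) (V := S')
      exact (LinearMap.injective_iff_surjective_of_finrank_eq_finrank this).mp hLinj
    obtain ⟨α, hα⟩ := hLsurj (-φ)
    have hctrα : ctr α Sig = -(ι ℝ φ) := by rw [← hL α, hα, map_neg]
    have halg_inj : Function.Injective (algebraMap ℝ (ExteriorAlgebra ℝ S')) :=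
      (ExteriorAlgebra.algebraMap_leftInverse S').injective
    have hαφ : α φ = 0 := by
      have := ctr_ctr α Sig
      rw [hctrα, map_neg, ctr_ι, neg_eq_zero] at this
      exact halg_inj (by rw [this, map_zero])
    -- find β with β φ = 1
    obtain ⟨β, hβφ⟩ : ∃ β : Module.Dual ℝ S', β φ = 1 := by
      have := (Module.forall_dual_apply_eq_zero_iff ℝ φ).not.mpr hφne
      push_neg at this
      obtain ⟨g, hg⟩ := this
      exact ⟨(g φ)⁻¹ • g, by simp [inv_mul_cancel₀ hg]⟩
    set w : S' := L β with hwdef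
    have hw : ι ℝ w = ctr β Sig := hL β
    have hβw : β w = 0 := by
      have := ctr_ctr β Sig
      rw [← hw, ctr_ι] at this
      exact halg_inj (by rw [this, map_zero])
    have hαw : α w = 1 := by
      have := ctr_comm α β Sig
      rw [← hw, hctrα, map_neg, ctr_ι, ctr_ι, hβφ] at this
      have h1 : algebraMap ℝ (ExteriorAlgebra ℝ S') (α w) = algebraMap ℝ _ 1 := by
        rw [map_one]; rw [this]; simp
      exact halg_inj h1
    -- the reduced 2-vector
    set Sig' : ExteriorAlgebra ℝ S' := Sig - ι ℝ φ * ι ℝ w with hSig'def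
    have hSig'2 : Sig' ∈ ⋀[ℝ]^2 S' := by
      refine Submodule.sub_mem _ hSig2 ?_
      have := mul_mem_pow_add (a := ι ℝ φ) (b := ι ℝ w) (k := 1) (l := 1)
        (ι_mem_one φ) (ι_mem_one w)
      exact this
    have hctrαSig' : ctr α Sig' = 0 := by
      rw [hSig'def, map_sub, hctrα, ctr_ι_mul_ι, hαφ, hαw, zero_smul, one_smul, zero_sub,
        sub_neg_eq_add, neg_add_cancel]
    have hctrβSig' : ctr β Sig' = 0 := by
      rw [hSig'def, map_sub, ← hw, ctr_ι_mul_ι, hβφ, hβw, zero_smul, one_smul, sub_zero, sub_self]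
    -- the projection ρ and the subspace W
    set ρ : S' →ₗ[ℝ] S' := LinearMap.id - β.smulRight φ - α.smulRight w with hρdef
    have hρ : ∀ v, ρ v = v - β v • φ - α v • w := by
      intro v; simp [hρdef]
    set W : Submodule ℝ S' := LinearMap.ker α ⊓ LinearMap.ker β with hWdef
    have hρW : ∀ v, ρ v ∈ W := by
      intro v
      refine Submodule.mem_inf.mpr ⟨LinearMap.mem_ker.mpr ?_, LinearMap.mem_ker.mpr ?_⟩
      · rw [hρ]; simp [hαφ, hαw]
      · rw [hρ]; simp [hβφ, hβw]
    set r : S' →ₗ[ℝ] ↥W := LinearMap.codRestrict W ρ hρW with hrdef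
    have hcomp : W.subtype ∘ₗ r = ρ := LinearMap.subtype_comp_codRestrict _ _ _
    have hjinj : Function.Injective (map W.subtype : ExteriorAlgebra ℝ ↥W →ₐ[ℝ] _) :=
      map_injective_field (Submodule.ker_subtype W)
    -- map ρ fixes Sig'
    have hfix : map ρ Sig' = Sig' := by
      rw [map_rho_eq α β φ w ρ hρ hSig'2, hctrαSig', hctrβSig']
      simp
    set Sig0 : ExteriorAlgebra ℝ ↥W := map r Sig' with hSig0def
    have hjSig0 : map W.subtype Sig0 = Sig' := by
      rw [hSig0def, ← AlgHom.comp_apply, map_comp_map, hcomp, hfix]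
    have hSig02 : Sig0 ∈ ⋀[ℝ]^2 ↥W := map_mem_pow r hSig'2
    -- dimension of W
    have hdimW : Module.finrank ℝ ↥W = 2 * (p + 1) := by
      set Φ : S' →ₗ[ℝ] ℝ × ℝ := LinearMap.prod β α with hΦdef
      have hker : LinearMap.ker Φ = W := by
        rw [hΦdef, LinearMap.ker_prod, hWdef, inf_comm]
      have hsurj : Function.Surjective Φ := by
        rintro ⟨s, t⟩
        refine ⟨s • φ + t • w, ?_⟩
        simp [hΦdef, LinearMap.prod_apply, hβφ, hβw, hαφ, hαw]
      have hrn := LinearMap.finrank_range_add_finrank_ker Φ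
      rw [LinearMap.range_eq_top.mpr hsurj, finrank_top, hker] at hrn
      have : Module.finrank ℝ (ℝ × ℝ) = 2 := by simp
      rw [this, hdim] at hrn
      omega
    -- Sig0 ^ (p+1) ≠ 0
    have hb2 : (ι ℝ φ * ι ℝ w) * (ι ℝ φ * ι ℝ w) = 0 := by
      rw [mul_assoc, ← mul_assoc (ι ℝ w), ι_mul_comm w φ]
      simp [ι_sq_zero, mul_assoc]
    have hcommute : Commute Sig' (ι ℝ φ * ι ℝ w) := by
      have h1 : Sig' * ι ℝ φ = ι ℝ φ * Sig' := by
        have := mul_ι_of_mem_pow hSig'2 φ; rw [this]; norm_num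
      have h2 : Sig' * ι ℝ w = ι ℝ w * Sig' := by
        have := mul_ι_of_mem_pow hSig'2 w; rw [this]; norm_num
      show Sig' * _ = _ * Sig'
      rw [← mul_assoc, h1, mul_assoc, h2, mul_assoc]
    have hSigsum : Sig = Sig' + ι ℝ φ * ι ℝ w := by rw [hSig'def]; abel
    have hbinom : Sig ^ (p+2) = Sig' ^ (p+2) + (p+2) • (Sig' ^ (p+1) * (ι ℝ φ * ι ℝ w)) := by
      rw [hSigsum]
      exact binom_sq_zero hcommute hb2 (p+1)
    have hSig'top : Sig' ^ (p+2) = 0 := by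
      have h0 : Sig0 ^ (p+2) = 0 := by
        refine eq_zero_of_mem_pow_gt (k := 2*(p+2)) ?_ (pow_mem_pow_two_mul hSig02 _)
        rw [hdimW]; omega
      have : Sig' ^ (p+2) = map W.subtype (Sig0 ^ (p+2)) := by
        rw [map_pow, hjSig0]
      rw [this, h0, map_zero]
    have hSig0p : Sig0 ^ (p+1) ≠ 0 := by
      intro h
      have hS'p : Sig' ^ (p+1) = 0 := by
        have : Sig' ^ (p+1) = map W.subtype (Sig0 ^ (p+1)) := by rw [map_pow, hjSig0]
        rw [this, h, map_zero]
      apply hSigp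
      rw [hbinom, hSig'top, hS'p, zero_mul, smul_zero, add_zero]
    -- apply the induction hypothesis
    obtain ⟨η₀, hη₀mem, hη₀ne, hη₀Sig, -⟩ := IH ↥W hdimW Sig0 hSig02 hSig0p 0
    set η : ExteriorAlgebra ℝ S' := ι ℝ φ * map W.subtype η₀ with hηdef
    have hjη₀mem : map W.subtype η₀ ∈ ⋀[ℝ]^(p+2) S' := map_mem_pow _ hη₀mem
    have hηmem : η ∈ ⋀[ℝ]^(p + 1 + 2) S' := by
      have := mul_mem_pow_add (k := 1) (ι_mem_one φ) hjη₀mem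
      convert this using 2
      omega
    -- η * ι φ = 0
    have hηφ : η * ι ℝ φ = 0 := by
      rw [hηdef, mul_assoc, mul_ι_of_mem_pow hjη₀mem φ, mul_smul_comm, ← mul_assoc, ι_sq_zero,
        zero_mul, smul_zero]
    -- η ≠ 0
    have hηne : η ≠ 0 := by
      intro h
      have hjη₀ : map W.subtype η₀ ≠ 0 := by
        intro h'
        exact hη₀ne (hjinj (by rw [h', map_zero]))
      have := ctr_ι_mul β φ (map W.subtype η₀)
      rw [← hηdef, h, map_zero, hβφ, one_smul,
        ctr_map_subtype W β inf_le_right η₀, mul_zero, sub_zero] at this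
      exact hjη₀ this.symm
    -- η * Sig = 0
    have hηSig : η * Sig = 0 := by
      have h1 : η * Sig' = 0 := by
        rw [hηdef, mul_assoc, ← hjSig0, ← map_mul, hη₀Sig, map_zero, mul_zero]
      have h2 : η * (ι ℝ φ * ι ℝ w) = 0 := by
        rw [hηdef, mul_assoc, ← mul_assoc (map W.subtype η₀), mul_ι_of_mem_pow hjη₀mem φ]
        simp [smul_mul_assoc, mul_smul_comm, ← mul_assoc, ι_sq_zero]
      rw [hSigsum, mul_add, h1, h2, add_zero]
    refine ⟨η, hηmem, hηne, hηSig, ?_⟩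
    rcases hφcase with h | h
    · rw [h, mul_zero]
    · rw [← h]; exact hηφ

end Main

/-- Existence of `η` in Case 2.3 of the paper. -/
theorem exists_eta
    (S' : Type*) [AddCommGroup S'] [Module ℝ S'] [FiniteDimensional ℝ S']
    (p : ℕ) (hp : 1 ≤ p) (hdim : Module.finrank ℝ S' = 2 * p)
    (Sig : ExteriorAlgebra ℝ S') (hSig2 : Sig ∈ ⋀[ℝ]^2 S') (hSigp : Sig ^ p ≠ 0)
    (φ : S') :
    ∃ η ∈ ⋀[ℝ]^(p + 1) S', η ≠ 0 ∧ η * Sig = 0 ∧ η * ι ℝ φ = 0 := by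
  obtain ⟨q, rfl⟩ : ∃ q, p = q + 1 := ⟨p - 1, (Nat.succ_pred_eq_of_pos hp).symm⟩
  have := exists_eta_aux q S' hdim Sig hSig2 hSigp φ
  simpa [show q + 1 + 1 = q + 2 from rfl] using this
end

section
/- Let V be a real vector space, θ a derivation of the exterior algebra ΛV mapping V into V, ε ∈ V, Ω ∈ Λ²V, and N ≥ 1. Suppose β₀ ∈ ΛV satisfies θβ₀ = 0, β₀ ∧ Ω = 0, and (θ^N ε) ∧ β₀ = 0. Then β := ε ∧ (θε) ∧ (θ²ε) ∧ … ∧ (θ^{N−1}ε) ∧ β₀ satisfies β ∧ Ω = 0, θβ = 0, and ε ∧ β = 0. -/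
open ExteriorAlgebra

/-- Lemma 4(1) of the paper: if `θ` (denoted `D`) is a derivation of `ΛV` mapping `V` into
`V`, `ε ∈ V`, `N ≥ 1`, and `β₀` satisfies `θβ₀ = 0`, `β₀ ∧ Ω = 0` and `θᴺε ∧ β₀ = 0`, then
`β := ε ∧ θε ∧ ⋯ ∧ θ^{N-1}ε ∧ β₀` satisfies `β ∧ Ω = 0`, `θβ = 0` and `ε ∧ β = 0`. -/
theorem beta_from_eps_chain
    (V : Type*) [AddCommGroup V] [Module ℝ V]
    (D : Module.End ℝ (ExteriorAlgebra ℝ V))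
    (hD : ∀ a b : ExteriorAlgebra ℝ V, D (a * b) = D a * b + a * D b)
    (hDV : ∀ x : V, ∃ y : V, D (ι ℝ x) = ι ℝ y)
    (ε : V) (Ω : ExteriorAlgebra ℝ V) (hΩ2 : Ω ∈ ⋀[ℝ]^2 V)
    (N : ℕ) (hN : 1 ≤ N)
    (β₀ : ExteriorAlgebra ℝ V) (hβ₀D : D β₀ = 0) (hβ₀Ω : β₀ * Ω = 0)
    (hβ₀N : (D ^ N) (ι ℝ ε) * β₀ = 0) :
    (List.ofFn fun i : Fin N => (D ^ (i : ℕ)) (ι ℝ ε)).prod * β₀ * Ω = 0 ∧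
    D ((List.ofFn fun i : Fin N => (D ^ (i : ℕ)) (ι ℝ ε)).prod * β₀) = 0 ∧
    ι ℝ ε * ((List.ofFn fun i : Fin N => (D ^ (i : ℕ)) (ι ℝ ε)).prod * β₀) = 0 := by
  choose g hg using hDV
  set y : ℕ → V := fun i => g^[i] ε with hy
  have hy0 : y 0 = ε := rfl
  have hysucc : ∀ i, y (i + 1) = g (y i) := by
    intro i; simp [hy, Function.iterate_succ_apply']
  have hyi : ∀ i, (D ^ i) (ι ℝ ε) = ι ℝ (y i) := by
    intro i
    induction i with
    | zero => simp [hy0]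
    | succ n ih =>
      rw [pow_succ', Module.End.mul_apply, ih, hg, hysucc]
  set P : ℕ → ExteriorAlgebra ℝ V := fun n => (List.ofFn fun i : Fin n => ι ℝ (y i)).prod
    with hPdef
  have hPsucc : ∀ n, P (n + 1) = P n * ι ℝ (y n) := by
    intro n
    simp only [hPdef]
    rw [List.ofFn_succ', List.prod_concat]
    simp
  have hDP : ∀ n, D (P (n + 1)) = P n * ι ℝ (y (n + 1)) := by
    intro n
    induction n with
    | zero =>
      have : P 1 = ι ℝ (y 0) := by simp [hPdef]
      rw [this, hg, hysucc]
      simp [hPdef]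
    | succ m ih =>
      rw [hPsucc (m + 1), hD, ih, hg, hysucc (m + 1), mul_assoc,
        ι_sq_zero, mul_zero, zero_add]
  have hPN : (List.ofFn fun i : Fin N => (D ^ (i : ℕ)) (ι ℝ ε)).prod = P N := by
    simp only [hPdef]
    exact congrArg List.prod (congrArg List.ofFn (funext fun i => hyi i))
  rw [hPN]
  obtain ⟨M, rfl⟩ : ∃ M, N = M + 1 := ⟨N - 1, (Nat.succ_pred_eq_of_pos hN).symm⟩
  refine ⟨?_, ?_, ?_⟩
  · rw [mul_assoc, hβ₀Ω, mul_zero]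
  · rw [hD, hβ₀D, mul_zero, add_zero, hDP, mul_assoc, ← hyi, hβ₀N, mul_zero]
  · have hP1 : P (M + 1) = ι ℝ ε * (List.ofFn fun i : Fin M => ι ℝ (y (i + 1))).prod := by
      simp [hPdef, List.ofFn_succ, hy0]
    rw [hP1, ← mul_assoc, ← mul_assoc, ι_sq_zero, zero_mul, zero_mul]
end
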